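/- Assume m0, m1, m2 are pairwise distinct and collinear, all lying on the affine line r. Let r⁰ be the smallest closed segment of r containing m0, m1, m2, and let r^c = r \ r⁰. Then for every x ∈ ℝ² with x ∉ {m0, m1, m2}, the TDOA map τ₂ is differentiable at x and the rank of Dτ₂(x) equals 0 if x ∈ r^c, equals 1 if x ∈ r⁰, and equals 2 if x ∉ r. -/

import Mathlib

/-!
At `x ≠ m` the gradient of `‖· - m‖` is the unit vector `normalize (x - m)`, so with
`uᵢ = normalize (x - mᵢ)` the derivative of `tau2` at `x` is
`v ↦ (⟪u₁ - u₀, v⟫, ⟪u₂ - u₀, v⟫)`. Its kernel is the orthogonal complement of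
`span {u₁ - u₀, u₂ - u₀}`, so its rank is the dimension of the vector span of `{u₀, u₁, u₂}`.

Off the line, `uᵢ = uⱼ` would put `x` on the line through `mᵢ` and `mⱼ`, so the `uᵢ` are three
distinct points of the unit circle, hence affinely independent. On the line they are
collinear, and they coincide exactly when `x` is outside the hull: outside, `x` lies on the same
side of every microphone; inside, a common value `u` would give `⟪u, x - mᵢ⟫ = ‖x - mᵢ‖ > 0`
for all `i`, an open half-space condition that passes to the convex hull, which contains `x`.
-/

open Module Submodule RealInnerProductSpace

noncomputable def tau2 (m0 m1 m2 : EuclideanSpace ℝ (Fin 2)) (x : EuclideanSpace ℝ (Fin 2)) :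
    ℝ × ℝ :=
  (‖x - m1‖ - ‖x - m0‖, ‖x - m2‖ - ‖x - m0‖)

theorem vectorSpan_triple_eq_span_sub {k V : Type*} [Ring k] [AddCommGroup V] [Module k V]
    (p₀ p₁ p₂ : V) : vectorSpan k {p₀, p₁, p₂} = span k {p₁ - p₀, p₂ - p₀} := by
  rw [vectorSpan_eq_span_vsub_set_right k (Set.mem_insert p₀ _)]
  simp [Set.image_insert_eq, span_insert_zero]

section Normed
variable {E : Type*} [NormedAddCommGroup E] [NormedSpace ℝ E]

theorem normalize_sub_eq_of_collinear_of_notMem_segment {x p q : E}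
    (hcol : Collinear ℝ {p, x, q}) (hseg : x ∉ segment ℝ p q) (hp : x ≠ p) (hq : x ≠ q) :
    NormedSpace.normalize (x - p) = NormedSpace.normalize (x - q) := by
  have hp' : x - p ≠ 0 := sub_ne_zero.2 hp
  have hq' : x - q ≠ 0 := sub_ne_zero.2 hq
  rw [NormedSpace.normalize, NormedSpace.normalize,
    ← sameRay_iff_inv_norm_smul_eq_of_ne hp' hq']
  rcases hcol.wbtw_or_wbtw_or_wbtw with h | h | h
  · exact absurd (mem_segment_iff_wbtw.2 h) hseg
  · simpa using h.sameRay_vsub_left.neg.symm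
  · simpa using h.sameRay_vsub_right.symm

theorem collinear_of_normalize_sub_eq {x p q : E}
    (h : NormedSpace.normalize (x - p) = NormedSpace.normalize (x - q)) :
    Collinear ℝ {x, p, q} := by
  rw [collinear_iff_of_mem (Set.mem_insert x _)]
  refine ⟨NormedSpace.normalize (x - p), ?_⟩
  simp only [Set.mem_insert_iff, Set.mem_singleton_iff, forall_eq_or_imp, forall_eq]
  refine ⟨⟨0, by simp⟩, ⟨-‖x - p‖, ?_⟩, ⟨-‖x - q‖, ?_⟩⟩
  · rw [neg_smul, NormedSpace.norm_smul_normalize]; simp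
  · rw [h, neg_smul, NormedSpace.norm_smul_normalize]; simp

theorem collinear_image_normalize_sub {x : E} {s : Set E} (h : Collinear ℝ (insert x s)) :
    Collinear ℝ ((fun m => NormedSpace.normalize (x - m)) '' s) := by
  obtain ⟨v, hv⟩ := (collinear_iff_of_mem (Set.mem_insert x s)).1 h
  refine (collinear_iff_exists_forall_eq_smul_vadd _).2 ⟨0, v, ?_⟩
  rintro _ ⟨m, hm, rfl⟩
  obtain ⟨t, rfl⟩ := hv m (Set.mem_insert_of_mem x hm)
  exact ⟨-(‖t • v‖⁻¹ * t), by simp [NormedSpace.normalize, smul_smul]⟩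

theorem normalize_sub_ne_of_notMem {s : AffineSubspace ℝ E} {x p q : E} (hx : x ∉ s)
    (hp : p ∈ s) (hq : q ∈ s) (hpq : p ≠ q) :
    NormedSpace.normalize (x - p) ≠ NormedSpace.normalize (x - q) := fun h =>
  hx <| affineSpan_pair_le_of_mem_of_mem hp hq <|
    (collinear_of_normalize_sub_eq h).mem_affineSpan_of_mem_of_ne (by simp) (by simp) (by simp)
      hpq

end Normed

section Inner
variable {E : Type*} [NormedAddCommGroup E] [InnerProductSpace ℝ E]

theorem hasFDerivAt_norm_sub_const {m x : E} (hx : x ≠ m) :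
    HasFDerivAt (fun y => ‖y - m‖) (innerSL ℝ (NormedSpace.normalize (x - m))) x := by
  have hsq : ‖x - m‖ ^ 2 ≠ 0 := by simpa [sub_eq_zero] using hx
  have h := (Real.hasDerivAt_sqrt hsq).comp_hasFDerivAt x
    ((hasFDerivAt_id x).sub_const m).norm_sq
  rw [show ((√·) ∘ fun y => ‖id y - m‖ ^ 2) = fun y => ‖y - m‖ by ext; simp] at h
  refine h.congr_fderiv ?_
  ext v
  simp only [norm_nonneg, Real.sqrt_sq, one_div, mul_inv_rev, id_eq, map_sub,
    ContinuousLinearMap.comp_id, smul_apply, sub_apply,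
    coe_innerSL_apply, nsmul_eq_mul, Nat.cast_ofNat, smul_eq_mul, NormedSpace.normalize, map_smul]
  field_simp

theorem rank_innerSL_prod [FiniteDimensional ℝ E] (a b : E) :
    LinearMap.rank ((innerSL ℝ a).prod (innerSL ℝ b) : E →L[ℝ] ℝ × ℝ).toLinearMap =
      finrank ℝ (span ℝ {a, b}) := by
  set f := ((innerSL ℝ a).prod (innerSL ℝ b) : E →L[ℝ] ℝ × ℝ).toLinearMap
  have hker : LinearMap.ker f = (span ℝ {a, b})ᗮ := by
    ext v
    rw [span_insert, ← inf_orthogonal, mem_inf, mem_orthogonal_singleton_iff_inner_right,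
      mem_orthogonal_singleton_iff_inner_right]
    simp [f]
  have h1 := LinearMap.finrank_range_add_finrank_ker f
  have h2 := (span ℝ {a, b}).finrank_add_finrank_orthogonal
  rw [LinearMap.rank, ← finrank_eq_rank]
  norm_cast
  rw [hker] at h1
  omega

theorem notMem_convexHull_of_forall_normalize_sub_eq {s : Set E} {x u : E}
    (h : ∀ m ∈ s, x ≠ m ∧ NormedSpace.normalize (x - m) = u) : x ∉ convexHull ℝ s := by
  have hs : s ⊆ {y | ⟪u, y⟫ < ⟪u, x⟫} := by
    intro m hm
    obtain ⟨hxm, rfl⟩ := h m hm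
    have : ⟪NormedSpace.normalize (x - m), x - m⟫ = ‖x - m‖ := by
      rw [NormedSpace.normalize, real_inner_smul_left, real_inner_self_eq_norm_sq]
      field_simp
    show ⟪_, m⟫ < _
    rw [← sub_pos, ← inner_sub_right, this]
    exact norm_pos_iff.2 (sub_ne_zero.2 hxm)
  intro hx
  exact lt_irrefl ⟪u, x⟫ (convexHull_min hs (convex_halfSpace_lt (innerₛₗ ℝ u).isLinear _) hx)

theorem finrank_vectorSpan_eq_two_of_norm_eq_one {u₀ u₁ u₂ : E}
    (h₀ : ‖u₀‖ = 1) (h₁ : ‖u₁‖ = 1) (h₂ : ‖u₂‖ = 1)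
    (h₀₁ : u₀ ≠ u₁) (h₀₂ : u₀ ≠ u₂) (h₁₂ : u₁ ≠ u₂) :
    finrank ℝ (vectorSpan ℝ {u₀, u₁, u₂}) = 2 := by
  have hsphere : EuclideanGeometry.Cospherical ({u₀, u₁, u₂} : Set E) :=
    ⟨0, 1, by simp [h₀, h₁, h₂]⟩
  have := (hsphere.affineIndependent_of_ne h₀₁ h₀₂ h₁₂).finrank_vectorSpan (n := 2) (by simp)
  rwa [show Set.range ![u₀, u₁, u₂] = {u₀, u₁, u₂} by
      simp only [Matrix.range_cons, Matrix.range_empty, Set.union_empty,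
        Set.singleton_union]] at this

end Inner

section TDOA
variable {m0 m1 m2 x : EuclideanSpace ℝ (Fin 2)}

theorem hasFDerivAt_tau2 (hx0 : x ≠ m0) (hx1 : x ≠ m1) (hx2 : x ≠ m2) :
    HasFDerivAt (tau2 m0 m1 m2)
      ((innerSL ℝ (NormedSpace.normalize (x - m1) - NormedSpace.normalize (x - m0))).prod
        (innerSL ℝ (NormedSpace.normalize (x - m2) - NormedSpace.normalize (x - m0)))) x := by
  rw [map_sub, map_sub]
  exact ((hasFDerivAt_norm_sub_const hx1).sub (hasFDerivAt_norm_sub_const hx0)).prodMk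
    ((hasFDerivAt_norm_sub_const hx2).sub (hasFDerivAt_norm_sub_const hx0))

theorem rank_fderiv_tau2 (hx0 : x ≠ m0) (hx1 : x ≠ m1) (hx2 : x ≠ m2) :
    LinearMap.rank (fderiv ℝ (tau2 m0 m1 m2) x).toLinearMap =
      finrank ℝ (vectorSpan ℝ {NormedSpace.normalize (x - m0), NormedSpace.normalize (x - m1),
        NormedSpace.normalize (x - m2)}) := by
  rw [(hasFDerivAt_tau2 hx0 hx1 hx2).fderiv, rank_innerSL_prod, vectorSpan_triple_eq_span_sub]

theorem rank_fderiv_tau2_of_collinear_of_notMem_convexHull (hx0 : x ≠ m0) (hx1 : x ≠ m1)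
    (hx2 : x ≠ m2) (hcol : Collinear ℝ {x, m0, m1, m2})
    (hxhull : x ∉ convexHull ℝ {m0, m1, m2}) :
    LinearMap.rank (fderiv ℝ (tau2 m0 m1 m2) x).toLinearMap = 0 := by
  have heq : ∀ q ∈ ({m0, m1, m2} : Set _), x ≠ q →
      NormedSpace.normalize (x - m0) = NormedSpace.normalize (x - q) := fun q hq hxq =>
    normalize_sub_eq_of_collinear_of_notMem_segment
      (hcol.subset (by simp [Set.insert_subset_iff, hq]))
      (fun h => hxhull (segment_subset_convexHull (by simp) hq h)) hx0 hxq
  rw [rank_fderiv_tau2 hx0 hx1 hx2, ← heq m1 (by simp) hx1, ← heq m2 (by simp) hx2]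
  simp

theorem rank_fderiv_tau2_of_mem_convexHull (hx0 : x ≠ m0) (hx1 : x ≠ m1) (hx2 : x ≠ m2)
    (hcol : Collinear ℝ {m0, m1, m2}) (hxhull : x ∈ convexHull ℝ {m0, m1, m2}) :
    LinearMap.rank (fderiv ℝ (tau2 m0 m1 m2) x).toLinearMap = 1 := by
  have hcolx : Collinear ℝ {x, m0, m1, m2} :=
    (collinear_insert_iff_of_mem_affineSpan (convexHull_subset_affineSpan _ hxhull)).2 hcol
  have hc := collinear_image_normalize_sub hcolx
  simp only [Set.image_insert_eq, Set.image_singleton] at hc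
  have hle := collinear_iff_finrank_le_one.1 hc
  have hne : finrank ℝ (vectorSpan ℝ {NormedSpace.normalize (x - m0),
      NormedSpace.normalize (x - m1), NormedSpace.normalize (x - m2)}) ≠ 0 := by
    rw [Ne, Submodule.finrank_eq_zero, vectorSpan_eq_bot_iff_subsingleton]
    intro hsub
    refine notMem_convexHull_of_forall_normalize_sub_eq
      (u := NormedSpace.normalize (x - m0)) ?_ hxhull
    simp only [Set.mem_insert_iff, Set.mem_singleton_iff, forall_eq_or_imp, forall_eq]
    exact ⟨⟨hx0, trivial⟩, ⟨hx1, hsub (by simp) (by simp)⟩, ⟨hx2, hsub (by simp) (by simp)⟩⟩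
  rw [rank_fderiv_tau2 hx0 hx1 hx2]
  norm_cast
  omega

theorem rank_fderiv_tau2_of_notMem {s : AffineSubspace ℝ (EuclideanSpace ℝ (Fin 2))}
    (hx : x ∉ s) (hm0 : m0 ∈ s) (hm1 : m1 ∈ s) (hm2 : m2 ∈ s)
    (h01 : m0 ≠ m1) (h02 : m0 ≠ m2) (h12 : m1 ≠ m2) :
    LinearMap.rank (fderiv ℝ (tau2 m0 m1 m2) x).toLinearMap = 2 := by
  have hx0 : x ≠ m0 := fun h => hx (h ▸ hm0)
  have hx1 : x ≠ m1 := fun h => hx (h ▸ hm1)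
  have hx2 : x ≠ m2 := fun h => hx (h ▸ hm2)
  rw [rank_fderiv_tau2 hx0 hx1 hx2, finrank_vectorSpan_eq_two_of_norm_eq_one
    (NormedSpace.norm_normalize (sub_ne_zero.2 hx0))
    (NormedSpace.norm_normalize (sub_ne_zero.2 hx1))
    (NormedSpace.norm_normalize (sub_ne_zero.2 hx2))
    (normalize_sub_ne_of_notMem hx hm0 hm1 h01) (normalize_sub_ne_of_notMem hx hm0 hm2 h02)
    (normalize_sub_ne_of_notMem hx hm1 hm2 h12)]
  rfl

end TDOA

theorem stmt1 (m0 m1 m2 : EuclideanSpace ℝ (Fin 2))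
    (h01 : m0 ≠ m1) (h02 : m0 ≠ m2) (h12 : m1 ≠ m2)
    (hcol : Collinear ℝ ({m0, m1, m2} : Set (EuclideanSpace ℝ (Fin 2))))
    (r : AffineSubspace ℝ (EuclideanSpace ℝ (Fin 2)))
    (hr : r = affineSpan ℝ ({m0, m1} : Set (EuclideanSpace ℝ (Fin 2))))
    (r0 : Set (EuclideanSpace ℝ (Fin 2)))
    (hr0 : r0 = convexHull ℝ ({m0, m1, m2} : Set (EuclideanSpace ℝ (Fin 2))))
    (x : EuclideanSpace ℝ (Fin 2))
    (hx : x ∉ ({m0, m1, m2} : Set (EuclideanSpace ℝ (Fin 2)))) :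
    DifferentiableAt ℝ (tau2 m0 m1 m2) x ∧
    (x ∈ (r : Set (EuclideanSpace ℝ (Fin 2))) \ r0 →
      LinearMap.rank
        ((fderiv ℝ (tau2 m0 m1 m2) x : EuclideanSpace ℝ (Fin 2) →L[ℝ] ℝ × ℝ) :
          EuclideanSpace ℝ (Fin 2) →ₗ[ℝ] ℝ × ℝ) = 0) ∧
    (x ∈ r0 →
      LinearMap.rank
        ((fderiv ℝ (tau2 m0 m1 m2) x : EuclideanSpace ℝ (Fin 2) →L[ℝ] ℝ × ℝ) :
          EuclideanSpace ℝ (Fin 2) →ₗ[ℝ] ℝ × ℝ) = 1) ∧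
    (x ∉ (r : Set (EuclideanSpace ℝ (Fin 2))) →
      LinearMap.rank
        ((fderiv ℝ (tau2 m0 m1 m2) x : EuclideanSpace ℝ (Fin 2) →L[ℝ] ℝ × ℝ) :
          EuclideanSpace ℝ (Fin 2) →ₗ[ℝ] ℝ × ℝ) = 2) := by
  simp only [Set.mem_insert_iff, Set.mem_singleton_iff, not_or] at hx
  obtain ⟨hx0, hx1, hx2⟩ := hx
  have hm2 : m2 ∈ line[ℝ, m0, m1] :=
    hcol.mem_affineSpan_of_mem_of_ne (by simp) (by simp) (by simp) h01
  subst hr hr0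
  refine ⟨(hasFDerivAt_tau2 hx0 hx1 hx2).differentiableAt, ?_,
    rank_fderiv_tau2_of_mem_convexHull hx0 hx1 hx2 hcol, fun hxr =>
    rank_fderiv_tau2_of_notMem hxr (left_mem_affineSpan_pair ℝ m0 m1)
      (right_mem_affineSpan_pair ℝ m0 m1) hm2 h01 h02 h12⟩
  rintro ⟨hxr, hxhull⟩
  have hxspan : x ∈ affineSpan ℝ {m0, m1, m2} :=
    affineSpan_mono ℝ (Set.insert_subset_insert (by simp)) hxr
  exact rank_fderiv_tau2_of_collinear_of_notMem_convexHull hx0 hx1 hx2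
    ((collinear_insert_iff_of_mem_affineSpan hxspan).2 hcol) hxhull
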